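/- arXiv:2201.07510 — 5 statements merged into one kernel-verified Lean document; each statement's English description precedes it below -/
import Mathlib

section
/- The binomial coefficient C(n,k) with 0 ≤ k ≤ n is a power of 2 if and only if k = 0, or k = n, or there exists m such that n = 2^m and k = 1, or there exists m such that n = 2^m and k = 2^m - 1. -/
/-!
If `0 < k < n` and `C(n, k) = p ^ m` with `p` prime, then `C(n, k) ≤ n`, since the `p`-part of
`C(n, k)` never exceeds `n` (Kummer/Legendre). On the other hand Pascal's rule gives `n < C(n, k)`
as soon as `2 ≤ k ≤ n - 2`, so only `k = 1` and `k = n - 1` remain, where `C(n, k) = n`.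
-/

namespace Nat

theorem self_le_choose_of_pos_of_lt {n k : ℕ} (hk : 0 < k) (hkn : k < n) : n ≤ n.choose k := by
  induction n generalizing k with
  | zero => omega
  | succ m ih =>
    rcases k with _ | _ | j
    · omega
    · simp
    · have hj : m ≤ m.choose (j + 1) := ih (by omega) (by omega)
      have hpos : 0 < m.choose (j + 1 + 1) := choose_pos (by omega)
      rw [choose_succ_succ']
      omega

theorem self_lt_choose_of_two_le_of_add_two_le {n k : ℕ} (hk : 2 ≤ k) (hkn : k + 2 ≤ n) :
    n < n.choose k := by
  obtain ⟨m, rfl⟩ : ∃ m, n = m + 1 := ⟨n - 1, by omega⟩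
  obtain ⟨j, rfl⟩ : ∃ j, k = j + 1 := ⟨k - 1, by omega⟩
  have h₁ : m ≤ m.choose j := self_le_choose_of_pos_of_lt (by omega) (by omega)
  have h₂ : m ≤ m.choose (j + 1) := self_le_choose_of_pos_of_lt (by omega) (by omega)
  rw [choose_succ_succ']
  omega

theorem choose_le_self_of_eq_prime_pow {p n k m : ℕ} (hp : p.Prime) (hn : 0 < n)
    (h : n.choose k = p ^ m) : n.choose k ≤ n := by
  have := pow_factorization_choose_le (p := p) (k := k) hn
  rwa [h, hp.factorization_pow, Finsupp.single_eq_same, ← h] at this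

theorem eq_one_or_eq_sub_one_of_choose_eq_prime_pow {p n k m : ℕ} (hp : p.Prime) (hk : 0 < k)
    (hkn : k < n) (h : n.choose k = p ^ m) : k = 1 ∨ k = n - 1 := by
  by_contra! hk'
  have hlt := self_lt_choose_of_two_le_of_add_two_le (n := n) (k := k) (by omega) (by omega)
  have hle := choose_le_self_of_eq_prime_pow hp (by omega) h
  omega

end Nat

theorem binom_pow_two_iff (n k : ℕ) (hk : k ≤ n) :
    (∃ m : ℕ, n.choose k = 2 ^ m) ↔
      k = 0 ∨ k = n ∨ (∃ m : ℕ, n = 2 ^ m ∧ k = 1) ∨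
        (∃ m : ℕ, n = 2 ^ m ∧ k = 2 ^ m - 1) := by
  constructor
  · rintro ⟨m, hm⟩
    rcases Nat.eq_zero_or_pos k with rfl | hk0
    · exact Or.inl rfl
    rcases hk.lt_or_eq with hkn | rfl
    · rcases Nat.eq_one_or_eq_sub_one_of_choose_eq_prime_pow Nat.prime_two hk0 hkn hm with rfl | rfl
      · exact Or.inr (Or.inr (Or.inl ⟨m, by simpa using hm, rfl⟩))
      · have hn : n = 2 ^ m := by
          rwa [← Nat.choose_symm hk, Nat.sub_sub_self hkn.pos, Nat.choose_one_right] at hm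
        exact Or.inr (Or.inr (Or.inr ⟨m, hn, hn ▸ rfl⟩))
    · exact Or.inr (Or.inl rfl)
  · rintro (rfl | rfl | ⟨m, rfl, rfl⟩ | ⟨m, rfl, rfl⟩)
    · exact ⟨0, by simp⟩
    · exact ⟨0, by simp⟩
    · exact ⟨m, by simp⟩
    · exact ⟨m, by rw [Nat.choose_symm Nat.one_le_two_pow, Nat.choose_one_right]⟩
end

section
/- Let A and B be finite sets of subsets of {1,...,n} such that for every A ∈ A and B ∈ B, |A ∩ B| is even and |B| is even. Then |A| · |B| ≤ 2^n. -/
/-!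
Send each set to its characteristic vector in `𝔽₂ⁿ`. The evenness of `|a ∩ b|` says that the
dot product of the two vectors vanishes, so the span `W` of the vectors of `B` lies in the
orthogonal complement of the span `U` of the vectors of `A`. Nondegeneracy of the dot product gives
`dim U + dim W ≤ n`, while `|A| ≤ |U| = 2 ^ dim U` and `|B| ≤ |W| = 2 ^ dim W`.
-/

open Finset Module Submodule Matrix

section CharVec

variable {α : Type*} [DecidableEq α]

def charVec (R : Type*) [Semiring R] (s : Finset α) : α → R := fun i => if i ∈ s then 1 else 0

variable {R : Type*} [Semiring R]

theorem charVec_injective [Nontrivial R] : Function.Injective (charVec R : Finset α → α → R) := by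
  intro s t h
  ext i
  have := congrFun h i
  by_cases hs : i ∈ s <;> by_cases ht : i ∈ t <;> simp_all [charVec]

theorem charVec_dotProduct_charVec [Fintype α] (s t : Finset α) :
    charVec R s ⬝ᵥ charVec R t = ((s ∩ t).card : R) := by
  simp only [dotProduct, charVec, ite_zero_mul_ite_zero, mul_one, ← mem_inter, sum_boole,
    filter_mem_eq_inter, univ_inter]

end CharVec

theorem dotProductBilin_nondegenerate (K n : Type*) [CommSemiring K] [Fintype n] :
    (dotProductBilin K K : LinearMap.BilinForm K (n → K)).Nondegenerate :=
  ⟨fun v hv => dotProduct_eq_zero v hv,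
    fun w hw => dotProduct_eq_zero w fun v => by simpa [dotProduct_comm] using hw v⟩

section FiniteField

variable {K V : Type*} [Field K] [AddCommGroup V] [Module K V]

theorem finrank_add_finrank_le_of_le_orthogonal [FiniteDimensional K V]
    {B : LinearMap.BilinForm K V} (hB : B.Nondegenerate) {U W : Submodule K V}
    (hWU : W ≤ B.orthogonal U) : finrank K U + finrank K W ≤ finrank K V := by
  have hW := Submodule.finrank_mono hWU
  rw [LinearMap.BilinForm.finrank_orthogonal hB] at hW
  have hU := Submodule.finrank_le U
  omega

theorem card_le_card_pow_finrank_span [Fintype K] (S : Finset V) :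
    S.card ≤ Fintype.card K ^ finrank K (span K (S : Set V)) := by
  have : Finite (span K (S : Set V)) := Module.finite_of_finite K
  rw [← Nat.card_eq_fintype_card, ← natCard_eq_pow_finrank, ← Nat.card_eq_finsetCard]
  exact Nat.card_mono (Set.toFinite _) subset_span

theorem span_le_orthogonal_span {B : LinearMap.BilinForm K V} {S T : Set V}
    (hST : ∀ s ∈ S, ∀ t ∈ T, B s t = 0) : span K T ≤ B.orthogonal (span K S) := by
  refine span_le.mpr fun t ht => (LinearMap.BilinForm.mem_orthogonal_iff).mpr fun u hu => ?_
  have : span K S ≤ LinearMap.ker (B.flip t) :=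
    span_le.mpr fun s hs => LinearMap.mem_ker.mpr (hST s hs t ht)
  exact this hu

theorem card_mul_card_le_of_forall_eq_zero [Fintype K] [FiniteDimensional K V]
    {B : LinearMap.BilinForm K V} (hB : B.Nondegenerate) (S T : Finset V)
    (hST : ∀ s ∈ S, ∀ t ∈ T, B s t = 0) :
    S.card * T.card ≤ Fintype.card K ^ finrank K V :=
  calc S.card * T.card
      ≤ Fintype.card K ^ finrank K (span K (S : Set V)) *
          Fintype.card K ^ finrank K (span K (T : Set V)) :=
        Nat.mul_le_mul (card_le_card_pow_finrank_span S) (card_le_card_pow_finrank_span T)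
    _ ≤ Fintype.card K ^ finrank K V := by
        rw [← pow_add]
        exact Nat.pow_le_pow_right Fintype.card_pos
          (finrank_add_finrank_le_of_le_orthogonal hB (span_le_orthogonal_span hST))

end FiniteField

theorem even_cross_bound_general (n : ℕ) (A B : Finset (Finset (Fin n)))
    (hinter : ∀ a ∈ A, ∀ b ∈ B, Even (a ∩ b).card) :
    A.card * B.card ≤ 2 ^ n := by
  have hχ := charVec_injective (α := Fin n) (R := ZMod 2)
  have hortho : ∀ u ∈ A.image (charVec (ZMod 2)), ∀ v ∈ B.image (charVec (ZMod 2)),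
      dotProductBilin (ZMod 2) (ZMod 2) u v = 0 := by
    simp only [mem_image, forall_exists_index, and_imp]
    rintro _ a ha rfl _ b hb rfl
    rw [dotProductBilin_apply_apply, charVec_dotProduct_charVec]
    exact (hinter a ha b hb).natCast_zmod_two
  have := card_mul_card_le_of_forall_eq_zero (dotProductBilin_nondegenerate (ZMod 2) (Fin n)) _ _
    hortho
  rwa [card_image_of_injective _ hχ, card_image_of_injective _ hχ, ZMod.card,
    finrank_fin_fun] at this

theorem even_cross_bound (n : ℕ) (A B : Finset (Finset (Fin n)))
    (hinter : ∀ a ∈ A, ∀ b ∈ B, Even (a ∩ b).card)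
    (heven : ∀ b ∈ B, Even b.card) :
    A.card * B.card ≤ 2 ^ n :=
  even_cross_bound_general n A B hinter
end

section
/- Let c/d ∈ [0,1] be an irreducible fraction and n a positive integer. If A and B are families of subsets of {1,...,n} such that |A ∩ B| = (c/d)·|B| for every A ∈ A and B ∈ B, then |A| · |B| ≤ 2^n. -/
/-! The condition `d |a ∩ b| = c |b|` with `d > 0` makes `⟪1_a - 1_a', 1_b⟫ = 0` for `a, a' ∈ A`
and `b ∈ B`, so the differences of indicator vectors of `A` lie in `Wᗮ`, where `W` is spanned by
the indicator vectors of `B`. A family of points of the cube `{0,1}^n` whose differences lie in a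
`k`-dimensional subspace has at most `2^k` members, since some `k` coordinates already separate
the subspace. Hence `|A| |B| ≤ 2^(dim Wᗮ + dim W) = 2^n`. -/

open Finset Module

section Separating

variable {K V ι : Type*} [Field K] [AddCommGroup V] [Module K V] [Fintype ι]

theorem Submodule.exists_finset_card_le_finrank_of_separating (W : Submodule K V)
    [FiniteDimensional K W] (φ : ι → Dual K V) (hφ : ∀ w ∈ W, (∀ i, φ i w = 0) → w = 0) :
    ∃ I : Finset ι, #I ≤ finrank K W ∧ ∀ w ∈ W, (∀ i ∈ I, φ i w = 0) → w = 0 := by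
  classical
  set ψ : ι → Dual K W := fun i => (φ i).comp W.subtype
  obtain ⟨I, -, -, hspan, hli⟩ :=
    exists_linearIndepOn_extension (v := ψ) (linearIndepOn_empty K ψ) (Set.empty_subset Set.univ)
  refine ⟨I.toFinset, ?_, fun w hw hI => ?_⟩
  · rw [Set.toFinset_card, ← Subspace.dual_finrank_eq]
    exact hli.fintype_card_le_finrank
  · refine hφ w hw fun j => ?_
    have hker : Submodule.span K (ψ '' I) ≤ LinearMap.ker (Dual.eval K W ⟨w, hw⟩) := by
      rw [Submodule.span_le]
      rintro _ ⟨i, hi, rfl⟩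
      exact hI i (Set.mem_toFinset.mpr hi)
    exact hker (hspan ⟨j, Set.mem_univ j, rfl⟩)

theorem card_le_two_pow_finrank_of_sub_mem [DecidableEq ι] (W : Submodule K V)
    [FiniteDimensional K W] (φ : ι → Dual K V) (hφ : ∀ w ∈ W, (∀ i, φ i w = 0) → w = 0)
    (x : Finset ι → V) (hx : ∀ s i, φ i (x s) = if i ∈ s then 1 else 0)
    (S : Finset (Finset ι)) (hS : ∀ s ∈ S, ∀ t ∈ S, x s - x t ∈ W) :
    #S ≤ 2 ^ finrank K W := by
  obtain ⟨I, hIcard, hI⟩ := W.exists_finset_card_le_finrank_of_separating φ hφ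
  have hinj : Set.InjOn (· ∩ I) S := by
    intro s hs t ht hst
    have hxst : x s = x t := sub_eq_zero.mp <| hI _ (hS s hs t ht) fun i hi => by
      have := congrArg (i ∈ ·) hst
      simp only [mem_inter, hi, and_true, eq_iff_iff] at this
      simp [hx, this]
    ext i
    have := congrArg (φ i) hxst
    rw [hx, hx] at this
    split_ifs at this <;> simp_all
  calc #S ≤ #I.powerset := card_le_card_of_injOn _ (fun s _ => by simp) hinj
    _ = 2 ^ #I := card_powerset I
    _ ≤ 2 ^ finrank K W := Nat.pow_le_pow_right two_pos hIcard

end Separating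

section Euclidean

variable {ι : Type*} [Fintype ι] [DecidableEq ι]

noncomputable def indicatorVec (s : Finset ι) : EuclideanSpace ℝ ι :=
  WithLp.toLp 2 fun i => if i ∈ s then 1 else 0

theorem inner_indicatorVec (s t : Finset ι) :
    inner ℝ (indicatorVec s) (indicatorVec t) = (#(s ∩ t) : ℝ) := by
  simp [indicatorVec, PiLp.inner_apply]

theorem card_le_two_pow_finrank_of_indicatorVec_sub_mem (W : Submodule ℝ (EuclideanSpace ℝ ι))
    (S : Finset (Finset ι)) (hS : ∀ s ∈ S, ∀ t ∈ S, indicatorVec s - indicatorVec t ∈ W) :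
    #S ≤ 2 ^ finrank ℝ W :=
  card_le_two_pow_finrank_of_sub_mem W EuclideanSpace.projₗ
    (fun w _ hw => by ext i; exact hw i) indicatorVec (fun _ _ => rfl) S hS

theorem indicatorVec_sub_mem_orthogonal {B : Finset (Finset ι)} {s t : Finset ι}
    (h : ∀ b ∈ B, #(s ∩ b) = #(t ∩ b)) :
    indicatorVec s - indicatorVec t ∈ (Submodule.span ℝ (indicatorVec '' (B : Set _)))ᗮ := by
  refine Submodule.isOrtho_iff_le.mp (Submodule.isOrtho_span.mpr ?_)
    (Submodule.mem_span_singleton_self _)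
  rintro _ rfl _ ⟨b, hb, rfl⟩
  rw [inner_sub_left, inner_indicatorVec, inner_indicatorVec, h b hb, sub_self]

end Euclidean

theorem frac_cross_upper_general (n c d : ℕ) (hd : 0 < d)
    (A B : Finset (Finset (Fin n)))
    (hcross : ∀ a ∈ A, ∀ b ∈ B, d * (a ∩ b).card = c * b.card) :
    A.card * B.card ≤ 2 ^ n := by
  set W : Submodule ℝ (EuclideanSpace ℝ (Fin n)) :=
    Submodule.span ℝ (indicatorVec '' (B : Set _))
  have hB : #B ≤ 2 ^ finrank ℝ W :=
    card_le_two_pow_finrank_of_indicatorVec_sub_mem W B fun s hs t ht =>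
      sub_mem (Submodule.subset_span ⟨s, hs, rfl⟩) (Submodule.subset_span ⟨t, ht, rfl⟩)
  have hA : #A ≤ 2 ^ finrank ℝ Wᗮ :=
    card_le_two_pow_finrank_of_indicatorVec_sub_mem Wᗮ A fun a ha a' ha' =>
      indicatorVec_sub_mem_orthogonal fun b hb =>
        Nat.eq_of_mul_eq_mul_left hd ((hcross a ha b hb).trans (hcross a' ha' b hb).symm)
  have hdim : finrank ℝ Wᗮ + finrank ℝ W = n := by
    rw [add_comm, W.finrank_add_finrank_orthogonal, finrank_euclideanSpace_fin]
  calc #A * #B ≤ 2 ^ finrank ℝ Wᗮ * 2 ^ finrank ℝ W := Nat.mul_le_mul hA hB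
    _ = 2 ^ n := by rw [← pow_add, hdim]

theorem frac_cross_upper (n c d : ℕ) (hn : 0 < n) (hd : 0 < d) (hcd : c ≤ d)
    (hcop : Nat.Coprime c d)
    (A B : Finset (Finset (Fin n)))
    (hcross : ∀ a ∈ A, ∀ b ∈ B, d * (a ∩ b).card = c * b.card) :
    A.card * B.card ≤ 2 ^ n :=
  frac_cross_upper_general n c d hd A B hcross
end

section
/- For every irreducible fraction c/d ∈ [0,1] and positive integer n, the maximum of |A|·|B| over all c/d-cross-intersecting pairs (A,B) of families of subsets of {1,...,n} equals exactly 2^n. -/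
/-!
Over `𝔽₂`, identify a set with its indicator vector. If `(A, B)` is `c/d`-cross-intersecting,
then `|a ∩ b|` does not depend on `a ∈ A`, so every difference of indicators of members of `A`
is orthogonal to the span `W` of the indicators of members of `B`. Hence
`|A| · |B| ≤ |W^⊥| · |W| = 2 ^ n`.
-/

open Finset Module

theorem Matrix.indicator_one_dotProduct_indicator_one {ι R : Type*} [Fintype ι] [DecidableEq ι]
    [NonAssocSemiring R] (s t : Finset ι) :
    (s : Set ι).indicator (1 : ι → R) ⬝ᵥ (t : Set ι).indicator 1 = #(s ∩ t) := by
  simp only [dotProduct, ← Pi.mul_apply]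
  simp [Set.indicator_apply, inter_comm]

section

variable {K V : Type*} [Field K] [AddCommGroup V] [Module K V] [FiniteDimensional K V]

theorem Subspace.natCard_mul_natCard_dualAnnihilator (W : Subspace K V) :
    Nat.card W * Nat.card W.dualAnnihilator = Nat.card K ^ finrank K V := by
  rw [natCard_eq_pow_finrank (K := K) (V := W),
    natCard_eq_pow_finrank (K := K) (V := W.dualAnnihilator), ← pow_add,
    Subspace.finrank_add_finrank_dualAnnihilator_eq]

theorem Module.Dual.card_mul_card_le_of_eqOn [Finite K] (S : Finset (Dual K V)) (T : Finset V)
    (hST : ∀ f ∈ S, ∀ g ∈ S, Set.EqOn f g T) :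
    #S * #T ≤ Nat.card K ^ finrank K V := by
  have : Finite V := Module.finite_of_finite K
  have : Finite (Dual K V) := Module.finite_of_finite K
  obtain rfl | ⟨f₀, hf₀⟩ := S.eq_empty_or_nonempty
  · simp
  set W := Submodule.span K (T : Set V)
  have hT : #T ≤ Nat.card W := by
    rw [← Nat.card_eq_finsetCard]
    exact Nat.card_mono (Set.toFinite _) Submodule.subset_span
  have hS : #S ≤ Nat.card W.dualAnnihilator := by
    rw [← Nat.card_eq_finsetCard]
    refine Nat.card_le_card_of_injective (fun f => ⟨f - f₀, ?_⟩) fun f g hfg => ?_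
    · rw [Submodule.mem_dualAnnihilator]
      intro w hw
      rw [LinearMap.sub_apply, sub_eq_zero]
      exact LinearMap.eqOn_span' (hST f f.2 f₀ hf₀) hw
    · exact Subtype.ext (sub_left_injective (congrArg Subtype.val hfg))
  calc #S * #T ≤ Nat.card W.dualAnnihilator * Nat.card W := Nat.mul_le_mul hS hT
    _ = Nat.card K ^ finrank K V := by
      rw [mul_comm, Subspace.natCard_mul_natCard_dualAnnihilator]

end

theorem frac_cross_max_general (n c d : ℕ) (hd : 0 < d) :
    IsGreatest {N : ℕ | ∃ A B : Finset (Finset (Fin n)),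
      (∀ a ∈ A, ∀ b ∈ B, d * (a ∩ b).card = c * b.card) ∧ N = A.card * B.card}
      (2 ^ n) := by
  classical
  refine ⟨⟨univ, {∅}, by simp, by simp [Fintype.card_finset]⟩, ?_⟩
  rintro _ ⟨A, B, hAB, rfl⟩
  let χ : Finset (Fin n) ↪ (Fin n → ZMod 2) :=
    ⟨fun s => (s : Set (Fin n)).indicator 1, fun s t h => coe_injective (Set.indicator_one_inj _ h)⟩
  let ψ : Finset (Fin n) ↪ Dual (ZMod 2) (Fin n → ZMod 2) :=
    χ.trans (dotProductEquiv (ZMod 2) (Fin n)).toEquiv.toEmbedding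
  have hψχ (a b : Finset (Fin n)) : ψ a (χ b) = #(a ∩ b) :=
    Matrix.indicator_one_dotProduct_indicator_one a b
  have hconst : ∀ a ∈ A, ∀ a' ∈ A, ∀ b ∈ B, #(a ∩ b) = #(a' ∩ b) := fun a ha a' ha' b hb =>
    Nat.eq_of_mul_eq_mul_left hd ((hAB a ha b hb).trans (hAB a' ha' b hb).symm)
  have key := Dual.card_mul_card_le_of_eqOn (A.map ψ) (B.map χ) <| by
    simp only [forall_mem_map, coe_map]
    rintro a ha a' ha' _ ⟨b, hb, rfl⟩
    rw [hψχ, hψχ, hconst a ha a' ha' b hb]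
  rwa [card_map, card_map, Nat.card_zmod, finrank_fin_fun] at key

theorem frac_cross_max (n c d : ℕ) (hn : 0 < n) (hd : 0 < d) (hcd : c ≤ d)
    (hcop : Nat.Coprime c d) :
    IsGreatest {N : ℕ | ∃ A B : Finset (Finset (Fin n)),
      (∀ a ∈ A, ∀ b ∈ B, d * (a ∩ b).card = c * b.card) ∧ N = A.card * B.card}
      (2 ^ n) :=
  frac_cross_max_general n c d hd
end

section
/- Let d ≥ 2, 1 ≤ c < d with gcd(c,d) = 1, and let ℓ ≥ 1 be an integer. If the binomial coefficient C(dℓ, cℓ) is a power of 2, then ℓ = 1 and d is a power of 2 (d = 2^m for some m ≥ 1). -/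
lemma choose_two_le_aux (n : ℕ) : ∀ k, 2 ≤ k → k ≤ n / 2 → n.choose 2 ≤ n.choose k := by
  intro k
  induction k with
  | zero => omega
  | succ k ih =>
    intro h2 hk
    rcases Nat.eq_or_lt_of_le h2 with h | h
    · rw [← h]
    · exact le_trans (ih (by omega) (by omega))
        (Nat.choose_le_succ_of_lt_half_left (by omega))

theorem binom_dl_cl_pow_two (c d ℓ : ℕ) (hd : 2 ≤ d) (hc : 1 ≤ c) (hcd : c < d)
    (hcop : Nat.Coprime c d) (hl : 1 ≤ ℓ)
    (hpow : ∃ m : ℕ, (d * ℓ).choose (c * ℓ) = 2 ^ m) :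
    ℓ = 1 ∧ ∃ m : ℕ, 1 ≤ m ∧ d = 2 ^ m := by
  obtain ⟨m, hm⟩ := hpow
  have hk1 : 1 ≤ c * ℓ := Nat.one_le_iff_ne_zero.2 (by positivity)
  have hkn : c * ℓ < d * ℓ := Nat.mul_lt_mul_of_lt_of_le hcd (le_refl ℓ) (by omega)
  have hn0 : 0 < d * ℓ := by omega
  -- 2^m ≤ d*ℓ
  have hle : 2 ^ m ≤ d * ℓ := by
    have := Nat.pow_factorization_choose_le (p := 2) (n := d * ℓ) (k := c * ℓ) hn0
    rwa [hm, Nat.Prime.factorization_pow Nat.prime_two, Finsupp.single_eq_same] at this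
  -- rule out the middle
  have hmid : c * ℓ ≤ 1 ∨ d * ℓ - c * ℓ ≤ 1 := by
    by_contra hcon
    push_neg at hcon
    obtain ⟨h2k, h2nk⟩ := hcon
    have hn4 : 4 ≤ d * ℓ := by omega
    have hch2 : (d * ℓ).choose 2 ≤ 2 ^ m := by
      rcases le_or_gt (c * ℓ) (d * ℓ / 2) with hhalf | hhalf
      · rw [← hm]; exact choose_two_le_aux _ _ h2k hhalf
      · rw [← hm, ← Nat.choose_symm (le_of_lt hkn)]
        exact choose_two_le_aux _ _ h2nk (by omega)
    rw [Nat.choose_two_right] at hch2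
    have h3n : 3 * (d * ℓ) ≤ d * ℓ * (d * ℓ - 1) := by
      calc 3 * (d * ℓ) = (d * ℓ) * 3 := by ring
        _ ≤ d * ℓ * (d * ℓ - 1) := Nat.mul_le_mul_left _ (by omega)
    have := Nat.div_le_div_right (c := 2) h3n
    omega
  have hm1 : d = 2 ^ m → 1 ≤ m := by
    intro h
    rcases Nat.eq_zero_or_pos m with h0 | h0
    · subst h0; omega
    · exact h0
  rcases hmid with h | h
  · -- c * ℓ = 1
    have hlc : ℓ ≤ c * ℓ := Nat.le_mul_of_pos_left ℓ (by omega)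
    have hcc : c ≤ c * ℓ := Nat.le_mul_of_pos_right c (by omega)
    have hc1 : c = 1 := by omega
    have hl1 : ℓ = 1 := by omega
    subst hc1 hl1
    simp only [mul_one, one_mul, Nat.choose_one_right] at hm
    exact ⟨rfl, m, hm1 hm, hm⟩
  · -- (d - c) * ℓ ≤ 1
    have hsub : d * ℓ - c * ℓ = (d - c) * ℓ := (Nat.sub_mul d c ℓ).symm
    rw [hsub] at h
    have hlc : ℓ ≤ (d - c) * ℓ := Nat.le_mul_of_pos_left ℓ (by omega)
    have hcc : d - c ≤ (d - c) * ℓ := Nat.le_mul_of_pos_right _ (by omega)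
    have hl1 : ℓ = 1 := by omega
    have hcd1 : c = d - 1 := by omega
    subst hl1
    simp only [mul_one] at hm
    rw [hcd1, Nat.choose_symm (show 1 ≤ d by omega), Nat.choose_one_right] at hm
    exact ⟨rfl, m, hm1 hm, hm⟩
end
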